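/- arXiv:1301.3658 — 4 statements merged into one kernel-verified Lean document; each statement's English description precedes it below -/
import Mathlib

section
/- Let B_{n,k} denote the partial Bell polynomials. For n ≥ k+1 and k ≥ 1, one has B_{n,k} = (1/x_1)·(1/(n-k)) ∑_{α=1}^{n-k} C(n,α)·[(k+1) − (n+1)/(α+1)]·x_{α+1}·B_{n−α,k}, where C(n,α) is the binomial coefficient. (Equivalently, clearing denominators: (n−k)·x_1·B_{n,k} = ∑_{α=1}^{n-k} [n!/(α! (n−α)!)]·[(k+1) − (n+1)/(α+1)]·x_{α+1}·B_{n−α,k}.) -/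
/-!
With `f = ∑_{m ≥ 1} x_m t^m / m!`, compare the coefficients of `t^n` in
`(f^(k+1))' = (k+1) f^k f'`. As `f` has no constant term, this reads
`(n+1) ∑_{a+b=n} f_{a+1} [t^b] f^k = (k+1) ∑_{a+b=n} (a+1) f_{a+1} [t^b] f^k`.
The term `a = 0` carries `x_1 [t^n] f^k`, the terms with `b < k` vanish, and rescaling by
`[t^b] f^k = (k!/b!) B_{b,k}` turns the remaining ones into the binomial sum.
-/

open PowerSeries Finset

/-- The series `∑_{m ≥ 1} x_m t^m / m!`. -/
noncomputable def bellSeries {R : Type*} [CommRing R] [Algebra ℚ R] (x : ℕ → R) :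
    PowerSeries R :=
  PowerSeries.mk fun m => if m = 0 then 0 else ((m.factorial : ℚ)⁻¹) • x m

/-- The partial Bell polynomial `B_{n,k}`, defined by
`(1/k!) (∑_{m≥1} x_m t^m/m!)^k = ∑_{n≥k} B_{n,k} t^n/n!`. -/
noncomputable def partialBell {R : Type*} [CommRing R] [Algebra ℚ R] (x : ℕ → R)
    (n k : ℕ) : R :=
  ((n.factorial : ℚ) / (k.factorial : ℚ)) • PowerSeries.coeff n (bellSeries x ^ k)
namespace PowerSeries

variable {R : Type*} [CommRing R]

theorem coeff_succ_mul_of_constantCoeff_eq_zero {f : R⟦X⟧} (hf : constantCoeff f = 0)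
    (g : R⟦X⟧) (n : ℕ) :
    coeff (n + 1) (f * g) = ∑ p ∈ antidiagonal n, coeff (p.1 + 1) f * coeff p.2 g := by
  rw [coeff_mul, Nat.sum_antidiagonal_succ, coeff_zero_eq_constantCoeff_apply, hf, zero_mul,
    zero_add]

theorem coeff_pow_eq_zero_of_lt {f : R⟦X⟧} (hf : constantCoeff f = 0) {j k : ℕ} (hj : j < k) :
    coeff j (f ^ k) = 0 :=
  X_pow_dvd_iff.mp (pow_dvd_pow_of_dvd (X_dvd_iff.mpr hf) k) j hj

theorem succ_smul_sum_coeff_mul_coeff_pow {f : R⟦X⟧} (hf : constantCoeff f = 0) (n k : ℕ) :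
    (n + 1) • ∑ p ∈ antidiagonal n, coeff (p.1 + 1) f * coeff p.2 (f ^ k) =
      (k + 1) • ∑ p ∈ antidiagonal n, (p.1 + 1) • (coeff (p.1 + 1) f * coeff p.2 (f ^ k)) := by
  have h := congrArg (coeff n) (Derivation.leibniz_pow (derivative R) f (k + 1))
  rw [coeff_derivative, pow_succ', coeff_succ_mul_of_constantCoeff_eq_zero hf, Nat.add_sub_cancel,
    map_nsmul, smul_eq_mul, mul_comm (f ^ k), coeff_mul] at h
  simp only [coeff_derivative, nsmul_eq_mul, Nat.cast_add, Nat.cast_one] at h ⊢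
  rw [mul_comm, h]
  exact congrArg _ (sum_congr rfl fun p _ => by ring)

end PowerSeries

open Nat

section BellSeries

variable {R : Type*} [CommRing R] [Algebra ℚ R] (x : ℕ → R)

theorem constantCoeff_bellSeries : constantCoeff (bellSeries x) = 0 := by
  rw [← coeff_zero_eq_constantCoeff_apply, bellSeries, coeff_mk, if_pos rfl]

theorem coeff_succ_bellSeries (m : ℕ) :
    coeff (m + 1) (bellSeries x) = (((m + 1)! : ℚ)⁻¹) • x (m + 1) := by
  rw [bellSeries, coeff_mk, if_neg m.succ_ne_zero]

theorem sum_range_smul_mul_coeff_bellSeries_pow_eq_zero (n k : ℕ) :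
    ∑ α ∈ range (n + 1), ((α ! : ℚ)⁻¹ * ((k + 1) - (n + 1) / (α + 1))) •
      (x (α + 1) * coeff (n - α) (bellSeries x ^ k)) = 0 := by
  have h := succ_smul_sum_coeff_mul_coeff_pow (constantCoeff_bellSeries x) n k
  rw [Nat.sum_antidiagonal_eq_sum_range_succ_mk, Nat.sum_antidiagonal_eq_sum_range_succ_mk,
    eq_comm, ← sub_eq_zero] at h
  simp only [coeff_succ_bellSeries, smul_mul_assoc, ← Nat.cast_smul_eq_nsmul ℚ, smul_sum,
    smul_smul, ← sum_sub_distrib, ← sub_smul] at h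
  rw [← h]
  refine sum_congr rfl fun α _ => congrArg (· • _) ?_
  rw [factorial_succ]
  push_cast
  field_simp

theorem natSub_smul_mul_coeff_bellSeries_pow (n k : ℕ) :
    ((n - k : ℕ) : ℚ) • (x 1 * coeff n (bellSeries x ^ k)) =
      ∑ α ∈ Icc 1 (n - k), ((α ! : ℚ)⁻¹ * ((k + 1) - (n + 1) / (α + 1))) •
        (x (α + 1) * coeff (n - α) (bellSeries x ^ k)) := by
  have hc : ∀ j < k, coeff j (bellSeries x ^ k) = 0 := fun j hj =>
    coeff_pow_eq_zero_of_lt (constantCoeff_bellSeries x) hj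
  obtain hnk | hkn := lt_or_ge n k
  · simp [hc n hnk, Nat.sub_eq_zero_of_le hnk.le]
  have htrunc : ∑ α ∈ range (n - k + 1), ((α ! : ℚ)⁻¹ * ((k + 1) - (n + 1) / (α + 1))) •
      (x (α + 1) * coeff (n - α) (bellSeries x ^ k)) = 0 := by
    rw [← sum_range_smul_mul_coeff_bellSeries_pow_eq_zero x n k]
    refine sum_subset (range_subset_range.2 (by omega)) fun α hα hα' => ?_
    rw [mem_range] at hα hα'
    rw [hc (n - α) (by omega), mul_zero, smul_zero]
  rw [sum_range_eq_add_Ico (n := n - k + 1) _ (by omega), Ico_add_one_right_eq_Icc] at htrunc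
  rw [← neg_eq_of_add_eq_zero_right htrunc, ← neg_smul, Nat.cast_sub hkn]
  simp only [factorial_zero, Nat.cast_one, inv_one, CharP.cast_eq_zero, zero_add, div_one,
    one_mul, Nat.sub_zero]
  congr 1
  ring

end BellSeries

theorem partialBell_recurrence_general (n k : ℕ) :
    ((n - k : ℕ) : ℚ) •
        (MvPolynomial.X 1 * partialBell (fun i => MvPolynomial.X i) n k :
          MvPolynomial ℕ ℚ) =
      ∑ α ∈ Finset.Icc 1 (n - k),
        ((n.choose α : ℚ) * (((k : ℚ) + 1) - ((n : ℚ) + 1) / ((α : ℚ) + 1))) •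
          (MvPolynomial.X (α + 1) *
            partialBell (fun i => MvPolynomial.X i) (n - α) k) := by
  simp only [partialBell, mul_smul_comm]
  rw [smul_comm, natSub_smul_mul_coeff_bellSeries_pow, smul_sum]
  refine sum_congr rfl fun α hα => ?_
  have hαn : α ≤ n := by grind
  rw [smul_smul, smul_smul, Nat.cast_choose ℚ hαn]
  congr 1
  field_simp

theorem partialBell_recurrence (n k : ℕ) (hk : 1 ≤ k) (hn : k + 1 ≤ n) :
    ((n - k : ℕ) : ℚ) •
        (MvPolynomial.X 1 * partialBell (fun i => MvPolynomial.X i) n k :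
          MvPolynomial ℕ ℚ) =
      ∑ α ∈ Finset.Icc 1 (n - k),
        ((n.choose α : ℚ) * (((k : ℚ) + 1) - ((n : ℚ) + 1) / ((α : ℚ) + 1))) •
          (MvPolynomial.X (α + 1) *
            partialBell (fun i => MvPolynomial.X i) (n - α) k) :=
  partialBell_recurrence_general n k
end

section
/- For n ≥ k+1 and k ≥ 1, the partial Bell polynomial B_{n,k+1} equals (1/(k+1)!) times the multiple sum ∑_{α_1=k}^{n−1} ∑_{α_2=k−1}^{α_1−1} ⋯ ∑_{α_k=1}^{α_{k−1}−1} C(n,α_1) C(α_1,α_2) ⋯ C(α_{k−1},α_k) · x_{n−α_1} x_{α_1−α_2} ⋯ x_{α_{k−1}−α_k} x_{α_k}. -/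
open PowerSeries Finset

/-!
For exponential generating functions, `n! [tⁿ] (F G) = ∑ⱼ C(n, j) (j! [tʲ] F) ((n-j)! [tⁿ⁻ʲ] G)`.
Peeling the factors of `F = ∑ₘ xₘ tᵐ/m!` off `F^(k+1)` one at a time therefore expands
`n! [tⁿ] F^(k+1)` into the nested sum, `α₁ > α₂ > ⋯ > α_k` being the degrees left after each
step. Since `F` has no constant term, every peeled degree is positive and `F^j` vanishes below
degree `j`, which produces the summation bounds.
-/

namespace PartialBell

variable {R : Type*} [CommRing R] [Algebra ℚ R]

theorem factorial_smul_coeff_mul (F G : PowerSeries R) (n : ℕ) :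
    (n.factorial : ℚ) • coeff n (F * G) =
      ∑ j ∈ range (n + 1), (n.choose j : ℚ) •
        (((j.factorial : ℚ) • coeff j F) * ((n - j).factorial : ℚ) • coeff (n - j) G) := by
  rw [coeff_mul, Nat.sum_antidiagonal_eq_sum_range_succ_mk, smul_sum]
  refine sum_congr rfl fun j hj => ?_
  rw [smul_mul_smul_comm, smul_smul, ← Nat.cast_mul, ← Nat.cast_mul, ← mul_assoc,
    Nat.choose_mul_factorial_mul_factorial (Nat.le_of_lt_succ (mem_range.1 hj))]

theorem coeff_zero_bellSeries (x : ℕ → R) : coeff 0 (bellSeries x) = 0 := by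
  simp [bellSeries]

theorem factorial_smul_coeff_bellSeries (x : ℕ → R) {m : ℕ} (hm : m ≠ 0) :
    (m.factorial : ℚ) • coeff m (bellSeries x) = x m := by
  rw [bellSeries, coeff_mk, if_neg hm, smul_smul,
    mul_inv_cancel₀ (Nat.cast_ne_zero.2 m.factorial_ne_zero), one_smul]

theorem coeff_bellSeries_pow_of_lt (x : ℕ → R) {j k : ℕ} (h : j < k) :
    coeff j (bellSeries x ^ k) = 0 := by
  have hX : (X : PowerSeries R) ∣ bellSeries x := by
    rw [X_dvd_iff, ← coeff_zero_eq_constantCoeff_apply, coeff_zero_bellSeries]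
  exact X_pow_dvd_iff.1 (pow_dvd_pow_of_dvd hX k) j h

def decreasingChains (n k : ℕ) : Finset (Fin k → ℕ) :=
  (Fintype.piFinset fun _ : Fin k => range n).filter
    (fun α => (∀ i : Fin k, k - (i : ℕ) ≤ α i) ∧
      ∀ i : Fin k, ∀ h : (i : ℕ) + 1 < k, α ⟨(i : ℕ) + 1, h⟩ < α i)

theorem strictAnti_iff_forall_succ_lt {k : ℕ} (α : Fin k → ℕ) :
    StrictAnti α ↔ ∀ i : Fin k, ∀ h : (i : ℕ) + 1 < k, α ⟨(i : ℕ) + 1, h⟩ < α i := by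
  cases k with
  | zero => exact ⟨fun _ i => i.elim0, fun _ i => i.elim0⟩
  | succ k =>
    rw [Fin.strictAnti_iff_succ_lt]
    refine ⟨fun h i hi => h ⟨i, by omega⟩, fun h i => h (Fin.castSucc i) (by simp)⟩

theorem mem_decreasingChains {n k : ℕ} {α : Fin k → ℕ} :
    α ∈ decreasingChains n k ↔
      (∀ i, α i < n) ∧ (∀ i : Fin k, k - (i : ℕ) ≤ α i) ∧ StrictAnti α := by
  simp only [decreasingChains, mem_filter, Fintype.mem_piFinset, mem_range,
    strictAnti_iff_forall_succ_lt]

theorem strictAnti_cons_iff {k : ℕ} (a : ℕ) (β : Fin k → ℕ) :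
    StrictAnti (Fin.cons a β : Fin (k + 1) → ℕ) ↔ (∀ j, β j < a) ∧ StrictAnti β := by
  refine ⟨fun h => ⟨fun j => h (Fin.succ_pos j), h.comp_strictMono (Fin.strictMono_succ)⟩,
    fun ⟨hlt, hβ⟩ i j hij => ?_⟩
  induction j using Fin.cases with
  | zero => exact absurd hij (Fin.not_lt_zero i)
  | succ j =>
    induction i using Fin.cases with
    | zero => simpa using hlt j
    | succ i => simpa using hβ (Fin.succ_lt_succ_iff.1 hij)

theorem cons_mem_decreasingChains_succ {n k a : ℕ} {β : Fin k → ℕ} :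
    (Fin.cons a β : Fin (k + 1) → ℕ) ∈ decreasingChains n (k + 1) ↔
      a ∈ Ico (k + 1) n ∧ β ∈ decreasingChains a k := by
  simp only [mem_decreasingChains, strictAnti_cons_iff, Fin.forall_fin_succ, Fin.cons_zero,
    Fin.cons_succ, Fin.val_zero, Fin.val_succ, mem_Ico, Nat.sub_zero, Nat.add_sub_add_right]
  constructor
  · rintro ⟨⟨han, -⟩, ⟨hka, hβk⟩, hβa, hβ⟩
    exact ⟨⟨hka, han⟩, hβa, hβk, hβ⟩
  · rintro ⟨⟨hka, han⟩, hβa, hβk, hβ⟩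
    exact ⟨⟨han, fun j => (hβa j).trans han⟩, ⟨hka, hβk⟩, hβa, hβ⟩

theorem sum_decreasingChains_succ {M : Type*} [AddCommMonoid M] (n k : ℕ)
    (g : (Fin (k + 1) → ℕ) → M) :
    ∑ α ∈ decreasingChains n (k + 1), g α =
      ∑ a ∈ Ico (k + 1) n, ∑ β ∈ decreasingChains a k, g (Fin.cons a β) := by
  rw [sum_sigma']
  refine sum_bij' (fun α _ => ⟨α 0, Fin.tail α⟩) (fun p _ => Fin.cons p.1 p.2) ?_ ?_ ?_ ?_ ?_
  · intro α hα
    rw [← Fin.cons_self_tail α, cons_mem_decreasingChains_succ] at hα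
    exact mem_sigma.2 hα
  · rintro ⟨a, β⟩ h
    exact cons_mem_decreasingChains_succ.2 (mem_sigma.1 h)
  · intro α _
    exact Fin.cons_self_tail α
  · rintro ⟨a, β⟩ _
    simp
  · intro α _
    rw [Fin.cons_self_tail]

noncomputable def chainWeight (x : ℕ → R) : (k : ℕ) → ℕ → (Fin k → ℕ) → R
  | 0, n, _ => x n
  | k + 1, n, α => (n.choose (α 0) : ℚ) • (x (n - α 0) * chainWeight x k (α 0) (Fin.tail α))

theorem chainWeight_cons (x : ℕ → R) (k n a : ℕ) (β : Fin k → ℕ) :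
    chainWeight x (k + 1) n (Fin.cons a β) =
      (n.choose a : ℚ) • (x (n - a) * chainWeight x k a β) := by
  simp only [chainWeight, Fin.cons_zero, Fin.tail_cons]

theorem factorial_smul_coeff_bellSeries_pow (x : ℕ → R) {k n : ℕ} (hn : k + 1 ≤ n) :
    (n.factorial : ℚ) • coeff n (bellSeries x ^ (k + 1)) =
      ∑ α ∈ decreasingChains n k, chainWeight x k n α := by
  induction k generalizing n with
  | zero =>
    simp [decreasingChains, chainWeight, factorial_smul_coeff_bellSeries x (m := n) (by omega)]
  | succ k ih =>
    calc (n.factorial : ℚ) • coeff n (bellSeries x ^ (k + 2))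
        = ∑ j ∈ range (n + 1), (n.choose j : ℚ) • (((j.factorial : ℚ) •
            coeff j (bellSeries x ^ (k + 1))) *
              ((n - j).factorial : ℚ) • coeff (n - j) (bellSeries x)) := by
          rw [pow_succ, factorial_smul_coeff_mul]
      _ = ∑ j ∈ Ico (k + 1) n, (n.choose j : ℚ) • (((j.factorial : ℚ) •
            coeff j (bellSeries x ^ (k + 1))) * x (n - j)) := by
          symm
          refine sum_subset_zero_on_sdiff (fun j hj => mem_range.2 (by grind))
            (fun j hj => ?_) (fun j hj => ?_)
          · rcases Nat.lt_or_ge j (k + 1) with hjk | hkj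
            · rw [coeff_bellSeries_pow_of_lt x hjk, smul_zero, zero_mul, smul_zero]
            · rw [show n - j = 0 by grind, coeff_zero_bellSeries, smul_zero, mul_zero, smul_zero]
          · rw [factorial_smul_coeff_bellSeries x (by grind)]
      _ = ∑ j ∈ Ico (k + 1) n, ∑ β ∈ decreasingChains j k,
            chainWeight x (k + 1) n (Fin.cons j β) := by
          refine sum_congr rfl fun j hj => ?_
          rw [ih (mem_Ico.1 hj).1, sum_mul, smul_sum]
          simp only [chainWeight_cons, mul_comm]
      _ = ∑ α ∈ decreasingChains n (k + 1), chainWeight x (k + 1) n α :=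
          (sum_decreasingChains_succ n k _).symm

noncomputable def closedFormTerm (x : ℕ → R) (n k : ℕ) (a : ℕ → ℕ) : R :=
  ((n.choose (a 0) : ℚ) * ∏ i ∈ range (k - 1), ((a i).choose (a (i + 1)) : ℚ)) •
    (x (n - a 0) * (∏ i ∈ range (k - 1), x (a i - a (i + 1))) * x (a (k - 1)))

theorem closedFormTerm_succ (x : ℕ → R) (n k : ℕ) (a : ℕ → ℕ) :
    closedFormTerm x n (k + 1 + 1) a =
      (n.choose (a 0) : ℚ) •
        (x (n - a 0) * closedFormTerm x (a 0) (k + 1) (fun i => a (i + 1))) := by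
  simp only [closedFormTerm, Nat.add_sub_cancel, prod_range_succ', Algebra.smul_def, map_mul,
    map_prod, map_natCast]
  ring

def extendByZero {k : ℕ} (α : Fin k → ℕ) (i : ℕ) : ℕ :=
  if h : i < k then α ⟨i, h⟩ else 0

theorem chainWeight_eq_closedFormTerm (x : ℕ → R) (k n : ℕ) (α : Fin (k + 1) → ℕ) :
    chainWeight x (k + 1) n α = closedFormTerm x n (k + 1) (extendByZero α) := by
  induction k generalizing n with
  | zero => simp [chainWeight, closedFormTerm, extendByZero]
  | succ k ih =>
    have h0 : extendByZero α 0 = α 0 := dif_pos (Nat.succ_pos _)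
    have hshift : (fun i => extendByZero α (i + 1)) = extendByZero (Fin.tail α) := by
      funext i
      simp only [extendByZero, Fin.tail, Nat.add_lt_add_iff_right]
      split_ifs <;> rfl
    rw [closedFormTerm_succ, h0, hshift, ← ih]
    rfl

end PartialBell

theorem partialBell_closed_form {R : Type*} [CommRing R] [Algebra ℚ R] (x : ℕ → R)
    (n k : ℕ) (hk : 1 ≤ k) (hn : k + 1 ≤ n) :
    partialBell x n (k + 1) =
      (((k + 1).factorial : ℚ)⁻¹) •
        ∑ α ∈ (Fintype.piFinset fun _ : Fin k => Finset.range n).filter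
            (fun α => (∀ i : Fin k, k - (i : ℕ) ≤ α i) ∧
              ∀ i : Fin k, ∀ h : (i : ℕ) + 1 < k, α ⟨(i : ℕ) + 1, h⟩ < α i),
          (fun a : ℕ → ℕ =>
              ((n.choose (a 0) : ℚ) *
                  ∏ i ∈ Finset.range (k - 1), ((a i).choose (a (i + 1)) : ℚ)) •
                (x (n - a 0) * (∏ i ∈ Finset.range (k - 1), x (a i - a (i + 1))) *
                  x (a (k - 1))))
            (fun i => if h : i < k then α ⟨i, h⟩ else 0) := by
  obtain ⟨m, rfl⟩ : ∃ m, k = m + 1 := ⟨k - 1, by omega⟩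
  rw [partialBell, div_eq_inv_mul, mul_smul, PartialBell.factorial_smul_coeff_bellSeries_pow x hn]
  exact congrArg _ (sum_congr rfl fun α _ => PartialBell.chainWeight_eq_closedFormTerm x m n α)
end

section
/- Let f(x) = ∑_{n≥0} f_n x^n be a formal power series over a commutative ℚ-algebra and let k be a non-negative integer, with g(x) = f(x)^k = ∑_{n≥0} g_n(k) x^n. Then for every n ≥ 0, ∑_{α=0}^{n} [α(k+1) − n] f_α g_{n−α}(k) = 0. -/
/-!
Let `θ = X · d/dX` be the Euler operator, which multiplies the `n`-th coefficient by `n`.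
Since `θ` is a derivation, `θ (f ^ (k + 1)) = (k + 1) f ^ k θ f`; comparing `n`-th coefficients gives
`n g_n(k + 1) = (k + 1) ∑ α f_α g_{n-α}(k)`, while `g_n(k + 1) = ∑ f_α g_{n-α}(k)`.
Subtracting the two expressions for `n g_n(k + 1)` is the claimed identity.
-/

open PowerSeries Finset

namespace PowerSeries

variable {R : Type*} [CommSemiring R]

theorem coeff_mul_eq_sum_range (f g : R⟦X⟧) (n : ℕ) :
    coeff n (f * g) = ∑ i ∈ range (n + 1), coeff i f * coeff (n - i) g := by
  rw [coeff_mul, Nat.sum_antidiagonal_eq_sum_range_succ_mk]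

theorem coeff_X_mul_derivative (f : R⟦X⟧) (n : ℕ) :
    coeff n (X * d⁄dX R f) = n • coeff n f := by
  cases n with
  | zero => simp
  | succ n => rw [coeff_succ_X_mul, coeff_derivative, nsmul_eq_mul, mul_comm, Nat.cast_succ]

theorem X_mul_derivative_pow_succ (f : R⟦X⟧) (k : ℕ) :
    X * d⁄dX R (f ^ (k + 1)) = (k + 1) • (f ^ k * (X * d⁄dX R f)) := by
  rw [Derivation.leibniz_pow, Nat.add_sub_cancel, smul_eq_mul, mul_smul_comm, mul_left_comm]

theorem nsmul_coeff_pow_succ (f : R⟦X⟧) (k n : ℕ) :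
    n • coeff n (f ^ (k + 1)) =
      (k + 1) • ∑ α ∈ range (n + 1), α • (coeff α f * coeff (n - α) (f ^ k)) := by
  rw [← coeff_X_mul_derivative, X_mul_derivative_pow_succ, map_nsmul, mul_comm,
    coeff_mul_eq_sum_range]
  simp only [coeff_X_mul_derivative, smul_mul_assoc]

end PowerSeries

theorem powerSeries_pow_coeff_recurrence_general {R : Type*} [CommRing R]
    (f : PowerSeries R) (k : ℕ) (n : ℕ) :
    ∑ α ∈ Finset.range (n + 1),
        ((α : ℤ) * ((k : ℤ) + 1) - (n : ℤ)) •
          (PowerSeries.coeff α f * PowerSeries.coeff (n - α) (f ^ k)) = 0 := by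
  have hsum := coeff_mul_eq_sum_range f (f ^ k) n
  have hweighted := nsmul_coeff_pow_succ f k n
  rw [← pow_succ'] at hsum
  simp only [sub_smul, mul_comm _ ((k : ℤ) + 1), mul_smul, sum_sub_distrib, ← smul_sum,
    natCast_zsmul, ← hsum]
  rw [← Nat.cast_succ, natCast_zsmul, ← hweighted, sub_self]

theorem powerSeries_pow_coeff_recurrence {R : Type*} [CommRing R] [Algebra ℚ R]
    (f : PowerSeries R) (k : ℕ) (n : ℕ) :
    ∑ α ∈ Finset.range (n + 1),
        ((α : ℤ) * ((k : ℤ) + 1) - (n : ℤ)) •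
          (PowerSeries.coeff α f * PowerSeries.coeff (n - α) (f ^ k)) = 0 :=
  powerSeries_pow_coeff_recurrence_general f k n
end

section
/- For n ≥ k+1 and k ≥ 1, the Stirling number of the second kind satisfies S(n, k+1) = (1/(k+1)!) ∑_{α_1=k}^{n−1} ∑_{α_2=k−1}^{α_1−1} ⋯ ∑_{α_k=1}^{α_{k−1}−1} C(n,α_1) C(α_1,α_2) ⋯ C(α_{k−1},α_k). -/
open Finset

/-- The Stirling number of the second kind, as a rational number:
`S(n,k) = (1/k!) ∑_{α=0}^{k} (−1)^{k−α} C(k,α) α^n`. -/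
noncomputable def stirling2 (n k : ℕ) : ℚ :=
  ((k.factorial : ℚ))⁻¹ *
    ∑ α ∈ Finset.range (k + 1), (-1) ^ (k - α) * (k.choose α : ℚ) * (α : ℚ) ^ n

/-!
By the alternating-sum formula, `k! S(n, k)` is the `k`-th forward difference of `x ↦ x ^ n`
at `0`. Since `Δ (x ^ n) = ∑_{m < n} C(n, m) x ^ m`, we get
`Δ^[k+1] (x ^ n) 0 = ∑_{m < n} C(n, m) Δ^[k] (x ^ m) 0`, where the terms with `m < k` vanish.
Unrolling this recursion produces one binomial factor per step along a strictly decreasing chain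
`n > α₁ > ⋯ > α_k`, and the recursion stops at `Δ (x ^ α_k) 0 = 1`, valid as `α_k ≥ 1`.
-/

open fwdDiff

lemma Fin.strictAnti_cons {α : Type*} [Preorder α] {k : ℕ} {a : α} {f : Fin k → α} :
    StrictAnti (Fin.cons a f : Fin (k + 1) → α) ↔ (∀ i, f i < a) ∧ StrictAnti f :=
  Fin.liftFun_cons (· > ·)

lemma Fin.strictAnti_iff_forall_val_succ_lt {α : Type*} [Preorder α] {k : ℕ}
    {f : Fin k → α} :
    StrictAnti f ↔ ∀ i : Fin k, ∀ h : (i : ℕ) + 1 < k, f ⟨(i : ℕ) + 1, h⟩ < f i := by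
  cases k with
  | zero => exact ⟨fun _ i => i.elim0, fun _ i => i.elim0⟩
  | succ k =>
    rw [Fin.strictAnti_iff_succ_lt]
    exact ⟨fun h i hi => h ⟨i, by omega⟩, fun h i => h i.castSucc (by simp)⟩

lemma Finset.sum_eq_sum_sum_cons {β M : Type*} [AddCommMonoid M] {k : ℕ}
    {s : Finset (Fin (k + 1) → β)} {A : Finset β} {t : β → Finset (Fin k → β)}
    (hs : ∀ a x, Fin.cons a x ∈ s ↔ a ∈ A ∧ x ∈ t a) (f : (Fin (k + 1) → β) → M) :
    ∑ x ∈ s, f x = ∑ a ∈ A, ∑ x ∈ t a, f (Fin.cons a x) := by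
  rw [sum_sigma']
  refine sum_bij' (fun x _ => ⟨x 0, Fin.tail x⟩) (fun p _ => Fin.cons p.1 p.2) ?_ ?_ ?_ ?_ ?_
  · intro x hx
    rw [← Fin.cons_self_tail x, hs] at hx
    simpa using hx
  · intro p hp
    exact (hs _ _).2 (mem_sigma.1 hp)
  · intro x _
    exact Fin.cons_self_tail x
  · intro p _
    simp
  · intro x _
    rw [Fin.cons_self_tail]

theorem fwdDiff_iter_succ_pow {R : Type*} [CommRing R] (n k : ℕ) :
    Δ_[1] ^[k + 1] (fun r : R ↦ r ^ n) =
      ∑ m ∈ range n, n.choose m • Δ_[1] ^[k] (fun r ↦ r ^ m) := by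
  have hΔ : (Δ_[1] fun r : R ↦ r ^ n) = ∑ m ∈ range n, n.choose m • fun r ↦ r ^ m := by
    ext x
    simp [nsmul_eq_mul, fwdDiff, add_pow, sum_range_succ, mul_comm]
  rw [Function.iterate_succ_apply, hΔ, fwdDiff_iter_finsetSum]
  simp only [fwdDiff_iter_const_smul]

theorem stirling2_eq_fwdDiff_iter (n k : ℕ) :
    stirling2 n k = (k.factorial : ℚ)⁻¹ * Δ_[1] ^[k] (fun x : ℚ ↦ x ^ n) 0 := by
  simp [stirling2, fwdDiff_iter_eq_sum_shift, zsmul_eq_mul]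

def decreasingChains (n k : ℕ) : Finset (Fin k → ℕ) :=
  (Fintype.piFinset fun _ : Fin k => range n).filter
    (fun α => (∀ i : Fin k, k - (i : ℕ) ≤ α i) ∧
      ∀ i : Fin k, ∀ h : (i : ℕ) + 1 < k, α ⟨(i : ℕ) + 1, h⟩ < α i)

lemma mem_decreasingChains {n k : ℕ} {α : Fin k → ℕ} :
    α ∈ decreasingChains n k ↔
      (∀ i, α i < n) ∧ (∀ i : Fin k, k - (i : ℕ) ≤ α i) ∧ StrictAnti α := by
  simp [decreasingChains, Fin.strictAnti_iff_forall_val_succ_lt]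

lemma cons_mem_decreasingChains {n k m : ℕ} {α : Fin k → ℕ} :
    (Fin.cons m α : Fin (k + 1) → ℕ) ∈ decreasingChains n (k + 1) ↔
      m ∈ Ico (k + 1) n ∧ α ∈ decreasingChains m k := by
  simp only [mem_decreasingChains, Fin.strictAnti_cons, Fin.forall_fin_succ, Fin.cons_zero,
    Fin.cons_succ, Fin.val_zero, Fin.val_succ, mem_Ico]
  constructor
  · rintro ⟨⟨hm, -⟩, ⟨hkm, hα⟩, hαm, hanti⟩
    exact ⟨⟨by omega, hm⟩, hαm, fun i => by have := hα i; omega, hanti⟩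
  · rintro ⟨⟨hkm, hm⟩, hαm, hα, hanti⟩
    exact ⟨⟨hm, fun i => (hαm i).trans hm⟩, ⟨by omega, fun i => by have := hα i; omega⟩,
      hαm, hanti⟩

-- Extending `α` by `0` gives the empty chain (`k = 0`) the weight `n.choose 0 = 1`.
noncomputable def chainWeight (n k : ℕ) (α : Fin k → ℕ) : ℚ :=
  let a : ℕ → ℕ := fun i => if h : i < k then α ⟨i, h⟩ else 0
  n.choose (a 0) * ∏ i ∈ range (k - 1), ((a i).choose (a (i + 1)) : ℚ)

lemma chainWeight_cons (n k m : ℕ) (α : Fin k → ℕ) :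
    chainWeight n (k + 1) (Fin.cons m α) = n.choose m * chainWeight m k α := by
  have htail : ∀ i,
      (if h : i + 1 < k + 1 then (Fin.cons m α : Fin (k + 1) → ℕ) ⟨i + 1, h⟩ else 0) =
        if h : i < k then α ⟨i, h⟩ else 0 := by
    intro i
    split_ifs <;> first | rfl | omega
  simp only [chainWeight, Nat.add_sub_cancel]
  cases k with
  | zero => simp
  | succ k =>
    rw [prod_range_succ']
    simp only [htail, Nat.add_sub_cancel, dif_pos (Nat.succ_pos _), Fin.zero_eta, Fin.cons_zero]
    ring

theorem fwdDiff_iter_succ_pow_eq_sum_decreasingChains {n : ℕ} (hn : 0 < n) (k : ℕ) :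
    Δ_[1] ^[k + 1] (fun x : ℚ ↦ x ^ n) 0 =
      ∑ α ∈ decreasingChains n k, chainWeight n k α := by
  induction k generalizing n with
  | zero =>
    simp [decreasingChains, chainWeight, fwdDiff, zero_pow hn.ne']
  | succ k ih =>
    have hvanish : ∀ m ∈ Ico 0 n, m ∉ Ico (k + 1) n →
        n.choose m • Δ_[1] ^[k + 1] (fun x : ℚ ↦ x ^ m) 0 = 0 := by
      intro m hm hmk
      rw [fwdDiff_iter_pow_eq_zero_of_lt (by simp_all), Pi.zero_apply, smul_zero]
    rw [fwdDiff_iter_succ_pow, Finset.sum_apply]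
    simp only [Pi.smul_apply]
    rw [range_eq_Ico, ← sum_subset (Ico_subset_Ico_left (Nat.zero_le _)) hvanish,
      sum_eq_sum_sum_cons (fun _ _ => cons_mem_decreasingChains)]
    refine sum_congr rfl fun m hm => ?_
    rw [nsmul_eq_mul, ih (by simp at hm; omega), mul_sum]
    simp only [chainWeight_cons]

theorem stirling2_closed_form_general (n k : ℕ) (hn : k + 1 ≤ n) :
    stirling2 n (k + 1) =
      (((k + 1).factorial : ℚ))⁻¹ *
        ∑ α ∈ (Fintype.piFinset fun _ : Fin k => Finset.range n).filter
            (fun α => (∀ i : Fin k, k - (i : ℕ) ≤ α i) ∧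
              ∀ i : Fin k, ∀ h : (i : ℕ) + 1 < k, α ⟨(i : ℕ) + 1, h⟩ < α i),
          (fun a : ℕ → ℕ =>
              (n.choose (a 0) : ℚ) *
                ∏ i ∈ Finset.range (k - 1), ((a i).choose (a (i + 1)) : ℚ))
            (fun i => if h : i < k then α ⟨i, h⟩ else 0) := by
  rw [stirling2_eq_fwdDiff_iter, fwdDiff_iter_succ_pow_eq_sum_decreasingChains (by omega)]
  rfl

theorem stirling2_closed_form (n k : ℕ) (hk : 1 ≤ k) (hn : k + 1 ≤ n) :
    stirling2 n (k + 1) =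
      (((k + 1).factorial : ℚ))⁻¹ *
        ∑ α ∈ (Fintype.piFinset fun _ : Fin k => Finset.range n).filter
            (fun α => (∀ i : Fin k, k - (i : ℕ) ≤ α i) ∧
              ∀ i : Fin k, ∀ h : (i : ℕ) + 1 < k, α ⟨(i : ℕ) + 1, h⟩ < α i),
          (fun a : ℕ → ℕ =>
              (n.choose (a 0) : ℚ) *
                ∏ i ∈ Finset.range (k - 1), ((a i).choose (a (i + 1)) : ℚ))
            (fun i => if h : i < k then α ⟨i, h⟩ else 0) :=
  stirling2_closed_form_general n k hn
end
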